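/- Let G_s be a connected simple graph on n ≥ 2 vertices with adjacency matrix A_s and largest eigenvalue Λ_s, and G_b a connected simple graph on m ≥ 2 vertices with adjacency matrix A_b and largest eigenvalue Λ_b. Let A = A_s ⊗ I_m + I_n ⊗ A_b and let c, e ∈ (0,1). Then there exists p ∈ (0,1)^{nm} with c (A p)_v (1 − p_v) = e p_v for every v (a nontrivial equilibrium of the Levins-type metacommunity submodel, in which every species has strictly positive occupancy in every site) if and only if Λ_s + Λ_b > e/c. -/

import Mathlib

/-!
The matrix `A` is the Kronecker sum of the two adjacency matrices, so `w v = w_s v.1 * w_b v.2`,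
built from positive top eigenvectors (Perron vectors) of `A_s` and `A_b`, is a positive
eigenvector of the symmetric nonnegative matrix `A` with eigenvalue `Λ = Λ_s + Λ_b`. For a
connected graph a Perron vector is the modulus `|x|` of any top eigenvector `x`: it has at least
the Rayleigh quotient of `x`, hence is a top eigenvector too, and its zero set is closed under
adjacency.

If `p ∈ (0,1)^N` is an equilibrium, then `e p_v < c (A p)_v` for every `v`, and pairing with `w`
gives `e ⟨w, p⟩ < c Λ ⟨w, p⟩`. Conversely, the equilibria are the fixed points of the monotone
map `p ↦ c A p / (c A p + e)` of `[0,1]^N` into itself. When `e < c Λ`, a small multiple of `w` lies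
below its image, so the greatest fixed point (Knaster–Tarski) is positive; it is `< 1` because
the map is.
-/

open Kronecker Matrix

namespace Matrix

section Nonneg

variable {n : Type*} [Fintype n] {A : Matrix n n ℝ} {x y : n → ℝ}

theorem mulVec_nonneg (hA : ∀ i j, 0 ≤ A i j) (hx : 0 ≤ x) : 0 ≤ A *ᵥ x :=
  fun i => Finset.sum_nonneg fun j _ => mul_nonneg (hA i j) (hx j)

theorem mulVec_mono (hA : ∀ i j, 0 ≤ A i j) (hxy : x ≤ y) : A *ᵥ x ≤ A *ᵥ y :=
  fun i => Finset.sum_le_sum fun j _ => mul_le_mul_of_nonneg_left (hxy j) (hA i j)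

theorem dotProduct_mulVec_le_abs (hA : ∀ i j, 0 ≤ A i j) (x : n → ℝ) :
    x ⬝ᵥ (A *ᵥ x) ≤ |x| ⬝ᵥ (A *ᵥ |x|) := by
  simp only [dotProduct, mulVec, Finset.mul_sum, Pi.abs_apply]
  refine Finset.sum_le_sum fun i _ => Finset.sum_le_sum fun j _ => ?_
  calc x i * (A i j * x j) = A i j * (x i * x j) := by ring
    _ ≤ A i j * (|x i| * |x j|) :=
        mul_le_mul_of_nonneg_left (abs_mul (x i) (x j) ▸ le_abs_self _) (hA i j)
    _ = |x i| * (A i j * |x j|) := by ring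

end Nonneg

section Spectrum

variable {n : Type*} [Fintype n] [DecidableEq n]

theorem exists_mulVec_eq_smul_of_mem_spectrum {K : Type*} [Field K] {M : Matrix n n K} {μ : K}
    (h : μ ∈ spectrum K M) : ∃ x ≠ 0, M *ᵥ x = μ • x := by
  rw [← spectrum_toLin', ← Module.End.hasEigenvalue_iff_mem_spectrum] at h
  obtain ⟨x, hx⟩ := h.exists_hasEigenvector
  exact ⟨x, hx.2, by simpa using hx.apply_eq_smul⟩

variable {M : Matrix n n ℝ}

theorem IsHermitian.sSup_spectrum_mem [Nonempty n] (hM : M.IsHermitian) :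
    sSup (spectrum ℝ M) ∈ spectrum ℝ M :=
  Set.Nonempty.csSup_mem (hM.spectrum_real_eq_range_eigenvalues ▸ Set.range_nonempty _)
    M.finite_real_spectrum

theorem IsHermitian.posSemidef_sSup_spectrum_smul_one_sub (hM : M.IsHermitian) :
    (sSup (spectrum ℝ M) • 1 - M).PosSemidef := by
  refine posSemidef_iff_isHermitian_and_spectrum_nonneg.2
    ⟨(isHermitian_one.smul (.all _)).sub hM, ?_⟩
  rw [← Algebra.algebraMap_eq_smul_one, ← spectrum.singleton_sub_eq]
  rintro _ ⟨_, rfl, μ, hμ, rfl⟩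
  exact sub_nonneg.2 (le_csSup M.finite_real_spectrum.bddAbove hμ)

theorem IsHermitian.dotProduct_mulVec_le (hM : M.IsHermitian) (x : n → ℝ) :
    x ⬝ᵥ (M *ᵥ x) ≤ sSup (spectrum ℝ M) * (x ⬝ᵥ x) := by
  have := hM.posSemidef_sSup_spectrum_smul_one_sub.dotProduct_mulVec_nonneg x
  simpa [sub_mulVec, smul_mulVec, dotProduct_sub] using this

theorem IsHermitian.mulVec_eq_smul_of_dotProduct_mulVec_eq (hM : M.IsHermitian) {x : n → ℝ}
    (hx : x ⬝ᵥ (M *ᵥ x) = sSup (spectrum ℝ M) * (x ⬝ᵥ x)) :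
    M *ᵥ x = sSup (spectrum ℝ M) • x := by
  have := (hM.posSemidef_sSup_spectrum_smul_one_sub.dotProduct_mulVec_zero_iff x).1
    (by simp [sub_mulVec, smul_mulVec, dotProduct_sub, hx])
  simpa [sub_mulVec, smul_mulVec, sub_eq_zero, eq_comm] using this

end Spectrum

section KroneckerSum

variable {R m n : Type*}

theorem kronecker_mulVec_mul [CommSemiring R] [Fintype m] [Fintype n] (A : Matrix m m R)
    (B : Matrix n n R) (x : m → R) (y : n → R) :
    (A ⊗ₖ B) *ᵥ (fun v => x v.1 * y v.2) = fun v => (A *ᵥ x) v.1 * (B *ᵥ y) v.2 := by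
  ext v
  simp only [mulVec, dotProduct, kroneckerMap_apply, Fintype.sum_prod_type, Finset.sum_mul_sum]
  exact Finset.sum_congr rfl fun i _ => Finset.sum_congr rfl fun j _ => by ring

variable [DecidableEq m] [DecidableEq n]

def kroneckerSum [Semiring R] (A : Matrix m m R) (B : Matrix n n R) :
    Matrix (m × n) (m × n) R :=
  A ⊗ₖ 1 + 1 ⊗ₖ B

theorem IsSymm.kroneckerSum [Semiring R] {A : Matrix m m R} {B : Matrix n n R} (hA : A.IsSymm)
    (hB : B.IsSymm) : (kroneckerSum A B).IsSymm := by
  refine IsSymm.ext fun i j => ?_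
  simp [Matrix.kroneckerSum, kroneckerMap_apply, hA.apply, hB.apply, one_apply, eq_comm]

theorem kroneckerSum_nonneg {A : Matrix m m ℝ} {B : Matrix n n ℝ} (hA : ∀ i j, 0 ≤ A i j)
    (hB : ∀ i j, 0 ≤ B i j) (i j : m × n) : 0 ≤ kroneckerSum A B i j := by
  simp only [Matrix.kroneckerSum, add_apply, kroneckerMap_apply, one_apply]
  split_ifs <;> simp [add_nonneg, hA, hB]

theorem kroneckerSum_mulVec_mul [CommSemiring R] [Fintype m] [Fintype n] {A : Matrix m m R}
    {B : Matrix n n R} {x : m → R} {y : n → R} {μ ν : R} (hx : A *ᵥ x = μ • x)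
    (hy : B *ᵥ y = ν • y) :
    kroneckerSum A B *ᵥ (fun v => x v.1 * y v.2) = (μ + ν) • fun v => x v.1 * y v.2 := by
  ext v
  simp only [Matrix.kroneckerSum, add_mulVec, kronecker_mulVec_mul, hx, hy, one_mulVec,
    Pi.add_apply, Pi.smul_apply, smul_eq_mul]
  ring

end KroneckerSum

end Matrix

namespace SimpleGraph

variable {V : Type*} {G : SimpleGraph V} [DecidableRel G.Adj]

theorem adjMatrix_nonneg (i j : V) : 0 ≤ G.adjMatrix ℝ i j := by
  rw [adjMatrix_apply]
  split_ifs <;> norm_num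

variable [Fintype V]

theorem eq_zero_of_adj_of_adjMatrix_mulVec_eq_zero {w : V → ℝ} (hw : 0 ≤ w) {a b : V}
    (ha : (G.adjMatrix ℝ *ᵥ w) a = 0) (hab : G.Adj a b) : w b = 0 := by
  rw [adjMatrix_mulVec_apply, Finset.sum_eq_zero_iff_of_nonneg fun u _ => hw u] at ha
  exact ha b (by simpa using hab)

theorem Connected.pos_of_adjMatrix_mulVec_eq_smul (hG : G.Connected) {w : V → ℝ} {Λ : ℝ}
    (hw : 0 ≤ w) (hw0 : w ≠ 0) (hAw : G.adjMatrix ℝ *ᵥ w = Λ • w) (v : V) : 0 < w v := by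
  have propagate {a b : V} (p : G.Walk a b) (ha : w a = 0) : w b = 0 := by
    induction p with
    | nil => exact ha
    | cons hab _ ih =>
      refine ih (eq_zero_of_adj_of_adjMatrix_mulVec_eq_zero hw ?_ hab)
      rw [hAw, Pi.smul_apply, ha, smul_zero]
  exact (hw v).lt_of_ne' fun hv => hw0 (funext fun u => propagate (hG.preconnected v u).some hv)

theorem Connected.exists_pos_adjMatrix_mulVec_eq_sSup_spectrum_smul [DecidableEq V]
    (hG : G.Connected) :
    ∃ w : V → ℝ, (∀ v, 0 < w v) ∧
      G.adjMatrix ℝ *ᵥ w = sSup (spectrum ℝ (G.adjMatrix ℝ)) • w := by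
  have := hG.nonempty
  have hM : (G.adjMatrix ℝ).IsHermitian := isHermitian_iff_isSymm.2 G.isSymm_adjMatrix
  set Λ := sSup (spectrum ℝ (G.adjMatrix ℝ))
  obtain ⟨x, hx0, hx⟩ := exists_mulVec_eq_smul_of_mem_spectrum hM.sSup_spectrum_mem
  have hAx : G.adjMatrix ℝ *ᵥ |x| = Λ • |x| := by
    refine hM.mulVec_eq_smul_of_dotProduct_mulVec_eq (le_antisymm (hM.dotProduct_mulVec_le _) ?_)
    calc Λ * (|x| ⬝ᵥ |x|) = Λ * (x ⬝ᵥ x) := by simp [dotProduct, abs_mul_abs_self]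
      _ = x ⬝ᵥ (G.adjMatrix ℝ *ᵥ x) := by rw [hx, dotProduct_smul, smul_eq_mul]
      _ ≤ |x| ⬝ᵥ (G.adjMatrix ℝ *ᵥ |x|) := dotProduct_mulVec_le_abs adjMatrix_nonneg x
  exact ⟨|x|, hG.pos_of_adjMatrix_mulVec_eq_smul (abs_nonneg x) (by simpa using hx0) hAx, hAx⟩

end SimpleGraph

section Levins

variable {N : Type*} [Fintype N] {A : Matrix N N ℝ} {c e : ℝ} {p q : N → ℝ}

theorem lt_mul_of_levins_equilibrium [Nonempty N] (he : 0 < e) {w : N → ℝ} {Λ : ℝ}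
    (hw : ∀ v, 0 < w v) (hwA : w ᵥ* A = Λ • w) (hp : ∀ v, p v ∈ Set.Ioo (0 : ℝ) 1)
    (hpA : ∀ v, c * (A *ᵥ p) v * (1 - p v) = e * p v) : e < c * Λ := by
  have hlt (v : N) : e * p v < c * (A *ᵥ p) v := by
    obtain ⟨hp0, hp1⟩ := hp v
    have hA1 : 0 < c * (A *ᵥ p) v * (1 - p v) := hpA v ▸ mul_pos he hp0
    have hAp : 0 < c * (A *ᵥ p) v := pos_of_mul_pos_left hA1 (sub_pos.2 hp1).le
    nlinarith [mul_pos hAp hp0, hpA v]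
  have hwp : 0 < w ⬝ᵥ p :=
    Finset.sum_pos (fun v _ => mul_pos (hw v) (hp v).1) Finset.univ_nonempty
  refine lt_of_mul_lt_mul_right ?_ hwp.le
  calc e * (w ⬝ᵥ p) = ∑ v, w v * (e * p v) := by
        simp only [dotProduct, Finset.mul_sum]
        exact Finset.sum_congr rfl fun v _ => by ring
    _ < ∑ v, w v * (c * (A *ᵥ p) v) :=
        Finset.sum_lt_sum_of_nonempty Finset.univ_nonempty fun v _ =>
          mul_lt_mul_of_pos_left (hlt v) (hw v)
    _ = c * (w ⬝ᵥ (A *ᵥ p)) := by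
        simp only [dotProduct, Finset.mul_sum]
        exact Finset.sum_congr rfl fun v _ => by ring
    _ = c * Λ * (w ⬝ᵥ p) := by
        rw [dotProduct_mulVec, hwA, smul_dotProduct, smul_eq_mul, mul_assoc]

noncomputable def levinsMap (A : Matrix N N ℝ) (c e : ℝ) (p : N → ℝ) : N → ℝ :=
  fun v => c * (A *ᵥ p) v / (c * (A *ᵥ p) v + e)

section FixedPoints

variable (hA : ∀ i j, 0 ≤ A i j) (hc : 0 ≤ c) (he : 0 < e)
include hA hc he

theorem levinsMap_denom_pos (hp : 0 ≤ p) (v : N) : 0 < c * (A *ᵥ p) v + e :=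
  add_pos_of_nonneg_of_pos (mul_nonneg hc (mulVec_nonneg hA hp v)) he

theorem levinsMap_nonneg (hp : 0 ≤ p) : 0 ≤ levinsMap A c e p := fun v =>
  div_nonneg (mul_nonneg hc (mulVec_nonneg hA hp v)) (levinsMap_denom_pos hA hc he hp v).le

theorem levinsMap_lt_one (hp : 0 ≤ p) (v : N) : levinsMap A c e p v < 1 :=
  (div_lt_one (levinsMap_denom_pos hA hc he hp v)).2 (lt_add_of_pos_right _ he)

theorem levinsMap_mono (hp : 0 ≤ p) (hpq : p ≤ q) : levinsMap A c e p ≤ levinsMap A c e q :=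
  fun v => by
    have hAp := mul_nonneg hc (mulVec_nonneg hA hp v)
    have hApq := mul_le_mul_of_nonneg_left (mulVec_mono hA hpq v) hc
    rw [levinsMap, levinsMap, div_le_div_iff₀ (levinsMap_denom_pos hA hc he hp v)
      (levinsMap_denom_pos hA hc he (hp.trans hpq) v)]
    nlinarith

theorem le_levinsMap_apply_iff (hp : 0 ≤ p) (v : N) :
    p v ≤ levinsMap A c e p v ↔ e * p v ≤ c * (A *ᵥ p) v * (1 - p v) := by
  rw [levinsMap, le_div_iff₀ (levinsMap_denom_pos hA hc he hp v)]
  constructor <;> intro h <;> linarith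

theorem levinsMap_apply_eq_iff (hp : 0 ≤ p) (v : N) :
    levinsMap A c e p v = p v ↔ c * (A *ᵥ p) v * (1 - p v) = e * p v := by
  rw [levinsMap, div_eq_iff (levinsMap_denom_pos hA hc he hp v).ne']
  constructor <;> intro h <;> linarith

theorem exists_levinsMap_eq_self_of_le (hp0 : 0 ≤ p) (hp : p ≤ levinsMap A c e p) :
    ∃ q, p ≤ q ∧ q ≤ 1 ∧ levinsMap A c e q = q := by
  have : Fact ((0 : N → ℝ) ≤ 1) := ⟨zero_le_one⟩
  let F : Set.Icc (0 : N → ℝ) 1 →o Set.Icc (0 : N → ℝ) 1 :=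
    { toFun q := ⟨levinsMap A c e q, levinsMap_nonneg hA hc he q.2.1,
        fun v => (levinsMap_lt_one hA hc he q.2.1 v).le⟩
      monotone' q r hqr := levinsMap_mono hA hc he q.2.1 hqr }
  have hp1 : p ≤ 1 := fun v => (hp v).trans (levinsMap_lt_one hA hc he hp0 v).le
  have hpF : (⟨p, hp0, hp1⟩ : Set.Icc (0 : N → ℝ) 1) ≤ F ⟨p, hp0, hp1⟩ := hp
  exact ⟨(OrderHom.gfp F).1, F.le_gfp hpF, (OrderHom.gfp F).2.2, congrArg Subtype.val F.map_gfp⟩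

end FixedPoints

theorem exists_levins_equilibrium (hA : ∀ i j, 0 ≤ A i j) (hc : 0 < c) (he : 0 < e)
    {w : N → ℝ} {Λ : ℝ} (hw : ∀ v, 0 < w v) (hAw : A *ᵥ w = Λ • w) (hce : e < c * Λ) :
    ∃ p : N → ℝ, (∀ v, p v ∈ Set.Ioo (0 : ℝ) 1) ∧
      ∀ v, c * (A *ᵥ p) v * (1 - p v) = e * p v := by
  have hcΛ : 0 < c * Λ := he.trans hce
  have hS : 0 < 1 + ∑ u, w u :=
    add_pos_of_pos_of_nonneg one_pos (Finset.sum_nonneg fun u _ => (hw u).le)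
  set t := (c * Λ - e) / (c * Λ * (1 + ∑ u, w u))
  have ht : 0 < t := div_pos (sub_pos.2 hce) (mul_pos hcΛ hS)
  have htw : 0 ≤ t • w := fun v => mul_nonneg ht.le (hw v).le
  have hsub : t • w ≤ levinsMap A c e (t • w) := fun v => by
    have hwv : w v ≤ 1 + ∑ u, w u := (Finset.single_le_sum (fun u _ => (hw u).le)
      (Finset.mem_univ v)).trans (le_add_of_nonneg_left zero_le_one)
    have hsmall : c * Λ * (t * w v) ≤ c * Λ - e := by
      have hΛ : Λ ≠ 0 := by rintro rfl; simp at hcΛ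
      have : c * Λ * (t * w v) = (c * Λ - e) * (w v / (1 + ∑ u, w u)) := by
        simp only [t]
        field_simp
      rw [this]
      exact mul_le_of_le_one_right (sub_pos.2 hce).le ((div_le_one hS).2 hwv)
    rw [le_levinsMap_apply_iff hA hc.le he htw, mulVec_smul, hAw]
    simp only [Pi.smul_apply, smul_eq_mul]
    nlinarith [mul_pos ht (hw v)]
  obtain ⟨q, htq, -, hq⟩ := exists_levinsMap_eq_self_of_le hA hc.le he htw hsub
  have hq0 : 0 ≤ q := htw.trans htq
  refine ⟨q, fun v => ⟨(mul_pos ht (hw v)).trans_le (htq v), ?_⟩,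
    fun v => (levinsMap_apply_eq_iff hA hc.le he hq0 v).1 (congrFun hq v)⟩
  exact congrFun hq v ▸ levinsMap_lt_one hA hc.le he hq0 v

end Levins

open SimpleGraph in
theorem levinsType_metacommunity_threshold_general {n m : ℕ}
    (Gs : SimpleGraph (Fin n)) (Gb : SimpleGraph (Fin m))
    [DecidableRel Gs.Adj] [DecidableRel Gb.Adj]
    (hGs : Gs.Connected) (hGb : Gb.Connected)
    (A : Matrix (Fin n × Fin m) (Fin n × Fin m) ℝ)
    (hA : A = (Gs.adjMatrix ℝ) ⊗ₖ (1 : Matrix (Fin m) (Fin m) ℝ)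
        + (1 : Matrix (Fin n) (Fin n) ℝ) ⊗ₖ (Gb.adjMatrix ℝ))
    (c e : ℝ) (hc : c ∈ Set.Ioo (0:ℝ) 1) (he : e ∈ Set.Ioo (0:ℝ) 1) :
    (∃ p : (Fin n × Fin m) → ℝ, (∀ v, p v ∈ Set.Ioo (0:ℝ) 1) ∧
        ∀ v, c * (A.mulVec p) v * (1 - p v) = e * p v)
      ↔ e / c < sSup (spectrum ℝ (Gs.adjMatrix ℝ)) + sSup (spectrum ℝ (Gb.adjMatrix ℝ)) := by
  obtain rfl : A = kroneckerSum (Gs.adjMatrix ℝ) (Gb.adjMatrix ℝ) := hA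
  obtain ⟨ws, hws, hAws⟩ := hGs.exists_pos_adjMatrix_mulVec_eq_sSup_spectrum_smul
  obtain ⟨wb, hwb, hAwb⟩ := hGb.exists_pos_adjMatrix_mulVec_eq_sSup_spectrum_smul
  have hw (v : Fin n × Fin m) : 0 < ws v.1 * wb v.2 := mul_pos (hws v.1) (hwb v.2)
  have hAw := kroneckerSum_mulVec_mul hAws hAwb
  have hsymm := (Gs.isSymm_adjMatrix (α := ℝ)).kroneckerSum (Gb.isSymm_adjMatrix (α := ℝ))
  rw [div_lt_iff₀ hc.1, mul_comm]
  constructor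
  · rintro ⟨p, hp, hpA⟩
    have := hGs.nonempty
    have := hGb.nonempty
    exact lt_mul_of_levins_equilibrium he.1 hw (hsymm.eq ▸ vecMul_transpose _ _ |>.trans hAw)
      hp hpA
  · exact exists_levins_equilibrium (kroneckerSum_nonneg adjMatrix_nonneg adjMatrix_nonneg)
      hc.1 he.1 hw hAw

/-- Levins-type metacommunity submodel: with `A = A_s ⊗ I_m + I_n ⊗ A_b` the adjacency
matrix of the product of a connected spatial network and a connected interaction
network, a nontrivial equilibrium `c (A p)_v (1 - p_v) = e p_v` with
`p ∈ (0,1)^{nm}` exists if and only if the metacommunity capacity `Λ_s + Λ_b`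
exceeds `e/c`. -/
theorem levinsType_metacommunity_threshold {n m : ℕ} (hn : 2 ≤ n) (hm : 2 ≤ m)
    (Gs : SimpleGraph (Fin n)) (Gb : SimpleGraph (Fin m))
    [DecidableRel Gs.Adj] [DecidableRel Gb.Adj]
    (hGs : Gs.Connected) (hGb : Gb.Connected)
    (A : Matrix (Fin n × Fin m) (Fin n × Fin m) ℝ)
    (hA : A = (Gs.adjMatrix ℝ) ⊗ₖ (1 : Matrix (Fin m) (Fin m) ℝ)
        + (1 : Matrix (Fin n) (Fin n) ℝ) ⊗ₖ (Gb.adjMatrix ℝ))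
    (c e : ℝ) (hc : c ∈ Set.Ioo (0:ℝ) 1) (he : e ∈ Set.Ioo (0:ℝ) 1) :
    (∃ p : (Fin n × Fin m) → ℝ, (∀ v, p v ∈ Set.Ioo (0:ℝ) 1) ∧
        ∀ v, c * (A.mulVec p) v * (1 - p v) = e * p v)
      ↔ e / c < sSup (spectrum ℝ (Gs.adjMatrix ℝ)) + sSup (spectrum ℝ (Gb.adjMatrix ℝ)) :=
  levinsType_metacommunity_threshold_general Gs Gb hGs hGb A hA c e hc he
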